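/- Let G be a finite p-group and k a field of characteristic p > 0. Let M be a finite-dimensional kG-module admitting a finite filtration 0 = L_0 ⊆ L_1 ⊆ ⋯ ⊆ L_s = M by kG-submodules such that every successive quotient L_i/L_{i−1} admits good permutation resolutions. Then M admits good permutation resolutions. -/

import Mathlib

open CategoryTheory

def IsPermutationModule (k G : Type) [Field k] [Group G]
    (P : Type) [AddCommGroup P] [Module (MonoidAlgebra k G) P] : Prop :=
  ∃ (X : Type) (_ : Fintype X) (m : MulAction G X),
    Nonempty (P ≃ₗ[MonoidAlgebra k G] (@Representation.ofMulAction k _ G _ X m).asModule)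

def HasPermResFreeUpTo (k G : Type) [Field k] [Group G] (m : ℕ)
    (M : Type) [AddCommGroup M] [Module (MonoidAlgebra k G) M] : Prop :=
  ∃ (n : ℕ) (P : ℕ → ModuleCat (MonoidAlgebra k G))
    (d : ∀ i, P (i + 1) ⟶ P i) (ε : P 0 ⟶ ModuleCat.of (MonoidAlgebra k G) M),
    (∀ i, IsPermutationModule k G (P i)) ∧
    (∀ i ≤ m, Module.Free (MonoidAlgebra k G) (P i)) ∧
    (∀ i, n < i → Subsingleton (P i)) ∧
    Function.Surjective ε ∧
    Function.Exact (d 0) ε ∧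
    ∀ i, Function.Exact (d (i + 1)) (d i)

def HasFinitePermRes (k G : Type) [Field k] [Group G]
    (M : Type) [AddCommGroup M] [Module (MonoidAlgebra k G) M] : Prop :=
  ∃ (n : ℕ) (P : ℕ → ModuleCat (MonoidAlgebra k G))
    (d : ∀ i, P (i + 1) ⟶ P i) (ε : P 0 ⟶ ModuleCat.of (MonoidAlgebra k G) M),
    (∀ i, IsPermutationModule k G (P i)) ∧
    (∀ i, n < i → Subsingleton (P i)) ∧
    Function.Surjective ε ∧
    Function.Exact (d 0) ε ∧
    ∀ i, Function.Exact (d (i + 1)) (d i)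

def HasGoodPermRes (k G : Type) [Field k] [Group G]
    (M : Type) [AddCommGroup M] [Module (MonoidAlgebra k G) M] : Prop :=
  ∀ m : ℕ, HasPermResFreeUpTo k G m M

/-!
By induction along the filtration it suffices to treat an extension `0 → A → M → N → 0`
(a horseshoe argument). Take a permutation resolution `P` of `A` of length `n`, free up to
degree `m`, and one `Q` of `N` free up to degree `max m (n + 2)`. Lift `Q₀ → N` to `σ : Q₀ → M`
and choose maps `θᵢ : Qᵢ₊₁ → Pᵢ` recursively so that `Pᵢ × Qᵢ`, with differential
`(x, y) ↦ (dx + θy, dy)` and augmentation `(x, y) ↦ ι ε x + σ y`, is a resolution of `M`.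
Choosing `θᵢ₊₁` is a lifting problem out of `Qᵢ₊₂`, so it needs projectivity only while
`Pᵢ ≠ 0`. Sums of permutation modules are permutation modules (take `X ⊕ Y`).
-/

open scoped MonoidAlgebra

namespace Representation

variable {k G V W : Type*} [CommSemiring k] [Monoid G] [AddCommMonoid V] [Module k V]
  [AddCommMonoid W] [Module k W] {ρ : Representation k G V} {σ : Representation k G W}

noncomputable def Equiv.asModuleLinearEquiv (φ : ρ.Equiv σ) : ρ.asModule ≃ₗ[k[G]] σ.asModule :=
  LinearEquiv.ofLinearMap (IntertwiningMap.equivLinearMapAsModule ρ σ φ.toIntertwiningMap)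
    (IntertwiningMap.equivLinearMapAsModule σ ρ φ.symm.toIntertwiningMap)
    (by ext x; exact φ.apply_symm_apply x) (by ext x; exact φ.symm_apply_apply x)

variable (ρ σ) in
noncomputable def prodAsModuleLinearEquiv :
    (ρ.prod σ).asModule ≃ₗ[k[G]] ρ.asModule × σ.asModule :=
  LinearEquiv.ofLinearMap
    ((IntertwiningMap.equivLinearMapAsModule _ _ (IntertwiningMap.fst k ρ σ)).prod
      (IntertwiningMap.equivLinearMapAsModule _ _ (IntertwiningMap.snd k ρ σ)))
    ((IntertwiningMap.equivLinearMapAsModule _ _ (IntertwiningMap.inl k ρ σ)).coprod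
      (IntertwiningMap.equivLinearMapAsModule _ _ (IntertwiningMap.inr k ρ σ)))
    (by ext x <;> first | exact add_zero _ | exact zero_add _)
    (by ext x; exact Prod.ext (add_zero x.1) (zero_add x.2))

variable (k G) in
noncomputable def ofMulActionSumEquiv (X Y : Type*) [MulAction G X] [MulAction G Y] :
    (ofMulAction k G (X ⊕ Y)).Equiv ((ofMulAction k G X).prod (ofMulAction k G Y)) :=
  .mk ((MonoidAlgebra.coeffLinearEquiv k).trans ((Finsupp.sumFinsuppLEquivProdFinsupp k).trans
    ((MonoidAlgebra.coeffLinearEquiv k).symm.prodCongr (MonoidAlgebra.coeffLinearEquiv k).symm)))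
    fun g => by ext x <;> rcases x with x | x <;> simp

end Representation

namespace IsPermutationModule

variable {k G : Type} [Field k] [Group G] {P P' : Type} [AddCommGroup P] [Module k[G] P]
  [AddCommGroup P'] [Module k[G] P']

theorem of_linearEquiv (e : P ≃ₗ[k[G]] P') (h : IsPermutationModule k G P) :
    IsPermutationModule k G P' :=
  let ⟨X, hX, _, ⟨eX⟩⟩ := h
  ⟨X, hX, _, ⟨e.symm.trans eX⟩⟩

theorem prod (hP : IsPermutationModule k G P) (hP' : IsPermutationModule k G P') :
    IsPermutationModule k G (P × P') := by
  obtain ⟨X, _, _, ⟨eX⟩⟩ := hP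
  obtain ⟨Y, _, _, ⟨eY⟩⟩ := hP'
  exact ⟨X ⊕ Y, inferInstance, inferInstance, ⟨(eX.prodCongr eY).trans <|
    (Representation.prodAsModuleLinearEquiv _ _).symm.trans
      (Representation.ofMulActionSumEquiv k G X Y).symm.asModuleLinearEquiv⟩⟩

theorem of_subsingleton [Subsingleton P] : IsPermutationModule k G P :=
  letI : MulAction G Empty := { smul _ := id, one_smul _ := rfl, mul_smul _ _ _ := rfl }
  have : Subsingleton (Representation.ofMulAction k G Empty).asModule :=
    (MonoidAlgebra.coeffLinearEquiv k).toEquiv.subsingleton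
  ⟨Empty, inferInstance, inferInstance, ⟨LinearEquiv.ofSubsingleton _ _⟩⟩

end IsPermutationModule

section Twisting

variable {R : Type*} [Ring R] {A M N P₀ P₁ P₂ Q₀ Q₁ Q₂ Q₃ : Type*}
  [AddCommGroup A] [Module R A] [AddCommGroup M] [Module R M] [AddCommGroup N] [Module R N]
  [AddCommGroup P₀] [Module R P₀] [AddCommGroup P₁] [Module R P₁] [AddCommGroup P₂] [Module R P₂]
  [AddCommGroup Q₀] [Module R Q₀] [AddCommGroup Q₁] [Module R Q₁]
  [AddCommGroup Q₂] [Module R Q₂] [AddCommGroup Q₃] [Module R Q₃]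

theorem Function.Exact.exists_comp_eq_of_projective [Module.Projective R Q₀] {f : P₂ →ₗ[R] P₁}
    {g : P₁ →ₗ[R] P₀} (hfg : Function.Exact f g) (h : Q₀ →ₗ[R] P₁) (hh : g ∘ₗ h = 0) :
    ∃ l : Q₀ →ₗ[R] P₂, f ∘ₗ l = h := by
  have hrange x : h x ∈ LinearMap.range f := (hfg _).mp (LinearMap.congr_fun hh x)
  obtain ⟨l, hl⟩ := Module.projective_lifting_property f.rangeRestrict (h.codRestrict _ hrange)
    f.surjective_rangeRestrict
  exact ⟨l, LinearMap.ext fun x => congrArg Subtype.val (LinearMap.congr_fun hl x)⟩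

def twistedProdMap (f : P₁ →ₗ[R] P₀) (t : Q₁ →ₗ[R] P₀) (g : Q₁ →ₗ[R] Q₀) :
    P₁ × Q₁ →ₗ[R] P₀ × Q₀ :=
  (f.coprod t).prod (g ∘ₗ LinearMap.snd R P₁ Q₁)

@[simp]
theorem twistedProdMap_apply (f : P₁ →ₗ[R] P₀) (t : Q₁ →ₗ[R] P₀) (g : Q₁ →ₗ[R] Q₀)
    (x : P₁ × Q₁) : twistedProdMap f t g x = (f x.1 + t x.2, g x.2) :=
  rfl

theorem exact_twistedProdMap {f₁ : P₂ →ₗ[R] P₁} {f₀ : P₁ →ₗ[R] P₀} {t₁ : Q₂ →ₗ[R] P₁}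
    {t₀ : Q₁ →ₗ[R] P₀} {g₁ : Q₂ →ₗ[R] Q₁} {g₀ : Q₁ →ₗ[R] Q₀} (hf : Function.Exact f₁ f₀)
    (hg : Function.Exact g₁ g₀) (ht : f₀ ∘ₗ t₁ + t₀ ∘ₗ g₁ = 0) :
    Function.Exact (twistedProdMap f₁ t₁ g₁) (twistedProdMap f₀ t₀ g₀) := by
  have ht' (y : Q₂) : f₀ (t₁ y) + t₀ (g₁ y) = 0 := LinearMap.congr_fun ht y
  rintro ⟨u, v⟩
  simp only [twistedProdMap_apply, Prod.mk_eq_zero, Set.mem_range, Prod.exists, Prod.mk.injEq]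
  constructor
  · rintro ⟨hu, hv⟩
    obtain ⟨y, rfl⟩ := (hg v).mp hv
    obtain ⟨x, hx⟩ := (hf (u - t₁ y)).mp <| by
      rw [map_sub, eq_neg_of_add_eq_zero_left (ht' y), sub_neg_eq_add, hu]
    exact ⟨x, y, by rw [hx, sub_add_cancel], rfl⟩
  · rintro ⟨x, y, rfl, rfl⟩
    exact ⟨by rw [map_add, hf.apply_apply_eq_zero, zero_add, ht'], hg.apply_apply_eq_zero y⟩

theorem exists_twist_step {f₁ : P₂ →ₗ[R] P₁} {f₀ : P₁ →ₗ[R] P₀}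
    {t₁ : Q₂ →ₗ[R] P₁} {t₀ : Q₁ →ₗ[R] P₀} {g₂ : Q₃ →ₗ[R] Q₂} {g₁ : Q₂ →ₗ[R] Q₁}
    (hQP : Module.Projective R Q₃ ∨ Subsingleton P₁) (hf : Function.Exact f₁ f₀)
    (hg : g₁ ∘ₗ g₂ = 0) (ht : f₀ ∘ₗ t₁ + t₀ ∘ₗ g₁ = 0) :
    ∃ t₂ : Q₃ →ₗ[R] P₂, f₁ ∘ₗ t₂ + t₁ ∘ₗ g₂ = 0 := by
  rcases hQP with hQ | hP
  · obtain ⟨t₂, h⟩ := hf.exists_comp_eq_of_projective (-(t₁ ∘ₗ g₂)) <| by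
      rw [LinearMap.comp_neg, ← LinearMap.comp_assoc, eq_neg_of_add_eq_zero_left ht,
        LinearMap.neg_comp, LinearMap.comp_assoc, hg, LinearMap.comp_zero, neg_zero, neg_zero]
    exact ⟨t₂, by rw [h, neg_add_cancel]⟩
  · exact ⟨0, Subsingleton.elim _ _⟩

theorem surjective_coprod_of_exact {ι : P₀ →ₗ[R] M} {π : M →ₗ[R] N} {a : P₁ →ₗ[R] P₀}
    {b : Q₁ →ₗ[R] N} {s : Q₁ →ₗ[R] M} (hιπ : Function.Exact ι π) (ha : Function.Surjective a)
    (hb : Function.Surjective b) (hs : π ∘ₗ s = b) : Function.Surjective ((ι ∘ₗ a).coprod s) := by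
  intro z
  obtain ⟨y, hy⟩ := hb (π z)
  obtain ⟨w, hw⟩ := (hιπ (z - s y)).mp <| by
    rw [map_sub, ← LinearMap.comp_apply, hs, hy, sub_self]
  obtain ⟨x, rfl⟩ := ha w
  exact ⟨(x, y), by simp [hw]⟩

theorem exact_twistedProdMap_coprod {ι : A →ₗ[R] M} {π : M →ₗ[R] N} {f : P₁ →ₗ[R] P₀}
    {a : P₀ →ₗ[R] A} {g : Q₁ →ₗ[R] Q₀} {b : Q₀ →ₗ[R] N} {s : Q₀ →ₗ[R] M} {t : Q₁ →ₗ[R] P₀}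
    (hι : Function.Injective ι) (hιπ : Function.Exact ι π) (hf : Function.Exact f a)
    (hg : Function.Exact g b) (hs : π ∘ₗ s = b) (ht : (ι ∘ₗ a) ∘ₗ t + s ∘ₗ g = 0) :
    Function.Exact (twistedProdMap f t g) ((ι ∘ₗ a).coprod s) := by
  -- postcomposing with the injective map `(id, π)` makes the augmentation triangular
  have hπ : Function.Injective (LinearMap.id.prod π) := fun _ _ h => congrArg Prod.fst h
  have key : (LinearMap.id.prod π) ∘ₗ (ι ∘ₗ a).coprod s = twistedProdMap (ι ∘ₗ a) s b := by
    ext x <;> simp [hιπ.apply_apply_eq_zero, ← hs]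
  rw [← hπ.comp_exact_iff_exact, key]
  exact exact_twistedProdMap (hι.comp_exact_iff_exact.mpr hf) hg ht

end Twisting

theorem exists_seq_of_forall_exists {S : ℕ → Type*} (r : ∀ n, S n → S (n + 1) → Prop)
    {x₀ : S 0} {x₁ : S 1} (h₀₁ : r 0 x₀ x₁) (step : ∀ n x y, r n x y → ∃ z, r (n + 1) y z) :
    ∃ x : ∀ n, S n, x 0 = x₀ ∧ ∀ n, r n (x n) (x (n + 1)) := by
  choose next hnext using step
  let pairs : ∀ n, {p : S n × S (n + 1) // r n p.1 p.2} := fun n =>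
    Nat.rec ⟨(x₀, x₁), h₀₁⟩ (fun n p => ⟨(p.1.2, next n _ _ p.2), hnext n _ _ p.2⟩) n
  exact ⟨fun n => (pairs n).1.1, rfl, fun n => (pairs n).2⟩

theorem exists_twisting {R M : Type*} [Ring R] [AddCommGroup M] [Module R M]
    {P Q : ℕ → ModuleCat R} {dP : ∀ i, P (i + 1) ⟶ P i} {dQ : ∀ i, Q (i + 1) ⟶ Q i}
    {a : P 0 →ₗ[R] M} {s : Q 0 →ₗ[R] M} {θ₀ : Q 1 →ₗ[R] P 0}
    (hQP : ∀ i, Module.Projective R (Q (i + 2)) ∨ Subsingleton (P i))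
    (ha : Function.Exact (dP 0).hom a) (hP : ∀ i, Function.Exact (dP (i + 1)).hom (dP i).hom)
    (hQ : ∀ i, (dQ i).hom ∘ₗ (dQ (i + 1)).hom = 0) (h₀ : a ∘ₗ θ₀ + s ∘ₗ (dQ 0).hom = 0) :
    ∃ θ : ∀ i, Q (i + 1) →ₗ[R] P i, θ 0 = θ₀ ∧
      ∀ i, (dP i).hom ∘ₗ θ (i + 1) + θ i ∘ₗ (dQ (i + 1)).hom = 0 := by
  obtain ⟨θ₁, h₁⟩ := exists_twist_step (hQP 0) ha (hQ 0) h₀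
  exact exists_seq_of_forall_exists (fun i x y => (dP i).hom ∘ₗ y + x ∘ₗ (dQ (i + 1)).hom = 0) h₁
    fun i _ _ h => exists_twist_step (hQP (i + 1)) (hP i) (hQ (i + 1)) h

namespace HasGoodPermRes

variable {k G : Type} [Field k] [Group G] {A M N : Type} [AddCommGroup A] [Module k[G] A]
  [AddCommGroup M] [Module k[G] M] [AddCommGroup N] [Module k[G] N]

theorem of_subsingleton [Subsingleton M] : HasGoodPermRes k G M := by
  intro m
  refine ⟨0, fun _ => ModuleCat.of k[G] PUnit, fun _ => 0, 0,
    fun _ => IsPermutationModule.of_subsingleton, fun _ _ => inferInstance,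
    fun _ _ => inferInstance, fun _ => ⟨0, Subsingleton.elim _ _⟩, ?_, fun _ => ?_⟩ <;>
  exact fun _ => ⟨fun _ => ⟨0, Subsingleton.elim _ _⟩, fun _ => Subsingleton.elim _ _⟩

theorem of_linearEquiv (e : M ≃ₗ[k[G]] N) (h : HasGoodPermRes k G M) : HasGoodPermRes k G N := by
  intro m
  obtain ⟨n, P, d, ε, hperm, hfree, hzero, hε, hexact₀, hexact⟩ := h m
  exact ⟨n, P, d, ε ≫ ModuleCat.ofHom e.toLinearMap, hperm, hfree, hzero, e.surjective.comp hε,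
    e.injective.comp_exact_iff_exact.mpr hexact₀, hexact⟩

theorem of_exact (ι : A →ₗ[k[G]] M) (π : M →ₗ[k[G]] N) (hι : Function.Injective ι)
    (hπ : Function.Surjective π) (hιπ : Function.Exact ι π) (hA : HasGoodPermRes k G A)
    (hN : HasGoodPermRes k G N) : HasGoodPermRes k G M := by
  intro m
  obtain ⟨nP, P, dP, εP, hPperm, hPfree, hPzero, hεP, hPexact₀, hPexact⟩ := hA m
  obtain ⟨nQ, Q, dQ, εQ, hQperm, hQfree, hQzero, hεQ, hQexact₀, hQexact⟩ := hN (max m (nP + 2))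
  have hQproj i (hi : i ≤ max m (nP + 2)) : Module.Projective k[G] (Q i) :=
    have := hQfree i hi; inferInstance
  have := hQproj 0 (Nat.zero_le _)
  obtain ⟨σ, hσ⟩ := Module.projective_lifting_property π εQ.hom hπ
  -- `θ₀` is a twisting step for the augmentations, with `-id : N → N` as the previous twist
  obtain ⟨θ₀, hθ₀⟩ := exists_twist_step (.inl (hQproj 1 (by omega)))
    (hεP.comp_exact_iff_exact.mpr hιπ) hQexact₀.linearMap_comp_eq_zero
    (show π ∘ₗ σ + (-LinearMap.id) ∘ₗ εQ.hom = 0 by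
      rw [hσ, LinearMap.neg_comp, LinearMap.id_comp, add_neg_cancel])
  have hQP i : Module.Projective k[G] (Q (i + 2)) ∨ Subsingleton (P i) := by
    by_cases hi : i + 2 ≤ max m (nP + 2)
    · exact .inl (hQproj _ hi)
    · exact .inr (hPzero i (by omega))
  obtain ⟨θ, rfl, hθ⟩ := exists_twisting hQP (hι.comp_exact_iff_exact.mpr hPexact₀) hPexact
    (fun i => (hQexact i).linearMap_comp_eq_zero) hθ₀
  refine ⟨max nP nQ, fun i => .of _ (P i × Q i), fun i => ModuleCat.ofHom
    (twistedProdMap (dP i).hom (θ i) (dQ i).hom), ModuleCat.ofHom ((ι ∘ₗ εP.hom).coprod σ),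
    fun i => (hPperm i).prod (hQperm i), fun i hi => ?_, fun i hi => ?_,
    surjective_coprod_of_exact hιπ hεP hεQ hσ,
    exact_twistedProdMap_coprod hι hιπ hPexact₀ hQexact₀ hσ hθ₀,
    fun i => exact_twistedProdMap (hPexact i) (hQexact i) (hθ i)⟩
  · have := hPfree i hi
    have := hQfree i (hi.trans (le_max_left _ _))
    exact inferInstanceAs (Module.Free _ (P i × Q i))
  · have := hPzero i (lt_of_le_of_lt (le_max_left _ _) hi)
    have := hQzero i (lt_of_le_of_lt (le_max_right _ _) hi)
    exact inferInstanceAs (Subsingleton (P i × Q i))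

end HasGoodPermRes

theorem hasGoodPermRes_of_filtration_general
    (k : Type) [Field k]
    (G : Type) [Group G]
    (M : Type) [AddCommGroup M] [Module (MonoidAlgebra k G) M]
    (s : ℕ) (L : Fin (s + 1) → Submodule (MonoidAlgebra k G) M)
    (hmono : Monotone L) (h0 : L 0 = ⊥) (htop : L (Fin.last s) = ⊤)
    (hquot : ∀ i : Fin s,
      HasGoodPermRes k G
        (↥(L i.succ) ⧸ (Submodule.comap (L i.succ).subtype (L i.castSucc)))) :
    HasGoodPermRes k G M := by
  have hL : ∀ i, HasGoodPermRes k G (L i) := by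
    refine Fin.induction ?_ fun i ih => ?_
    · have := Submodule.subsingleton_iff_eq_bot.mpr h0
      exact .of_subsingleton
    · have hle := hmono i.castSucc_le_succ
      have hexact : Function.Exact (Submodule.inclusion hle) (Submodule.mkQ _) :=
        LinearMap.exact_iff.mpr ((Submodule.ker_mkQ _).trans (Submodule.range_inclusion _ _ _).symm)
      exact .of_exact _ _ (Submodule.inclusion_injective hle) (Submodule.mkQ_surjective _) hexact
        ih (hquot i)
  exact (hL (Fin.last s)).of_linearEquiv ((LinearEquiv.ofEq _ _ htop).trans Submodule.topEquiv)

/-- If a finite-dimensional `kG`-module `M` (with `G` a finite `p`-group, `char k = p`)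
has a finite filtration `0 = L₀ ⊆ L₁ ⊆ ⋯ ⊆ L_s = M` whose successive quotients
`L_i / L_{i-1}` all admit good permutation resolutions, then `M` admits good
permutation resolutions. -/
theorem hasGoodPermRes_of_filtration
    (p : ℕ) (hp : p.Prime) (k : Type) [Field k] [CharP k p]
    (G : Type) [Group G] [Finite G] (hG : IsPGroup p G)
    (M : Type) [AddCommGroup M] [Module (MonoidAlgebra k G) M]
    [Module.Finite (MonoidAlgebra k G) M]
    (s : ℕ) (L : Fin (s + 1) → Submodule (MonoidAlgebra k G) M)
    (hmono : Monotone L) (h0 : L 0 = ⊥) (htop : L (Fin.last s) = ⊤)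
    (hquot : ∀ i : Fin s,
      HasGoodPermRes k G
        (↥(L i.succ) ⧸ (Submodule.comap (L i.succ).subtype (L i.castSucc)))) :
    HasGoodPermRes k G M :=
  hasGoodPermRes_of_filtration_general k G M s L hmono h0 htop hquot
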